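/- arXiv:2110.15518 — 8 statements merged into one kernel-verified Lean document; each statement's English description precedes it below -/
import Mathlib

section
/- Let C be an abelian braided category with biexact tensor product and V a transparent object of C (i.e. c_{V,U} ∘ c_{U,V} = id_{U⊗V} for all objects U). Then every subobject of V is transparent. -/
open CategoryTheory CategoryTheory.Limits CategoryTheory.MonoidalCategory

/-- In an abelian braided category with biexact tensor product, every subobject of a
transparent object is transparent. -/
theorem stmt_0 {C : Type*} [Category C] [MonoidalCategory C] [BraidedCategory C] [Abelian C]
    (hMonoL : ∀ (W : C) {X Y : C} (f : X ⟶ Y), Mono f → Mono (W ◁ f))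
    (hMonoR : ∀ (W : C) {X Y : C} (f : X ⟶ Y), Mono f → Mono (f ▷ W))
    (hEpiL : ∀ (W : C) {X Y : C} (f : X ⟶ Y), Epi f → Epi (W ◁ f))
    (hEpiR : ∀ (W : C) {X Y : C} (f : X ⟶ Y), Epi f → Epi (f ▷ W))
    (V : C) (hV : ∀ U : C, (β_ U V).hom ≫ (β_ V U).hom = 𝟙 (U ⊗ V))
    (U : C) (ι : U ⟶ V) (hι : Mono ι) :
    ∀ W : C, (β_ W U).hom ≫ (β_ U W).hom = 𝟙 (W ⊗ U) := by
  intro W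
  have := hMonoL W ι hι
  rw [← cancel_mono (W ◁ ι), Category.assoc, ← BraidedCategory.braiding_naturality_left ι W,
    ← Category.assoc, ← BraidedCategory.braiding_naturality_right W ι, Category.assoc, hV W,
    Category.id_comp, Category.comp_id]
end

section
/- Let C be an abelian braided category with biexact tensor product and V a transparent object of C. Then every quotient object of V is transparent. -/
open CategoryTheory CategoryTheory.Limits CategoryTheory.MonoidalCategory

/-- In an abelian braided category with biexact tensor product, every quotient of a
transparent object is transparent. -/
theorem stmt_1 {C : Type*} [Category C] [MonoidalCategory C] [BraidedCategory C] [Abelian C]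
    (hMonoL : ∀ (W : C) {X Y : C} (f : X ⟶ Y), Mono f → Mono (W ◁ f))
    (hMonoR : ∀ (W : C) {X Y : C} (f : X ⟶ Y), Mono f → Mono (f ▷ W))
    (hEpiL : ∀ (W : C) {X Y : C} (f : X ⟶ Y), Epi f → Epi (W ◁ f))
    (hEpiR : ∀ (W : C) {X Y : C} (f : X ⟶ Y), Epi f → Epi (f ▷ W))
    (V : C) (hV : ∀ U : C, (β_ U V).hom ≫ (β_ V U).hom = 𝟙 (U ⊗ V))
    (Q : C) (π : V ⟶ Q) (hπ : Epi π) :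
    ∀ W : C, (β_ W Q).hom ≫ (β_ Q W).hom = 𝟙 (W ⊗ Q) := by
  intro W
  have hepi : Epi (W ◁ π) := hEpiL W π hπ
  rw [← cancel_epi (W ◁ π)]
  rw [← Category.assoc, BraidedCategory.braiding_naturality_right,
    Category.assoc, BraidedCategory.braiding_naturality_left,
    ← Category.assoc, hV W, Category.id_comp, Category.comp_id]
end

section
/- Let C be an abelian braided category whose tensor product is left exact in each variable. If f: V → V is a transparent endomorphism, then the image of f is a transparent object. -/
open CategoryTheory CategoryTheory.Limits CategoryTheory.MonoidalCategory

/-- In an abelian braided category whose tensor product is exact in each variable, the image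
of a transparent endomorphism is a transparent object. -/
theorem stmt_2 {C : Type*} [Category C] [MonoidalCategory C] [BraidedCategory C] [Abelian C]
    (hMonoL : ∀ (W : C) {X Y : C} (f : X ⟶ Y), Mono f → Mono (W ◁ f))
    (hMonoR : ∀ (W : C) {X Y : C} (f : X ⟶ Y), Mono f → Mono (f ▷ W))
    (hEpiL : ∀ (W : C) {X Y : C} (f : X ⟶ Y), Epi f → Epi (W ◁ f))
    (hEpiR : ∀ (W : C) {X Y : C} (f : X ⟶ Y), Epi f → Epi (f ▷ W))
    (V : C) (f : V ⟶ V)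
    (hf1 : ∀ U : C, (β_ U V).hom ≫ (f ▷ U) ≫ (β_ V U).hom = U ◁ f)
    (hf2 : ∀ W : C, (β_ V W).hom ≫ (W ◁ f) ≫ (β_ W V).hom = f ▷ W) :
    ∀ U : C, (β_ U (image f)).hom ≫ (β_ (image f) U).hom = 𝟙 (U ⊗ image f) := by
  intro U
  haveI : Epi (U ◁ factorThruImage f) := hEpiL U _ inferInstance
  haveI : Mono (U ◁ image.ι f) := hMonoL U _ inferInstance
  rw [← cancel_epi (U ◁ factorThruImage f), ← cancel_mono (U ◁ image.ι f)]
  calc _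
      = (β_ U V).hom ≫ (factorThruImage f ▷ U) ≫ (image.ι f ▷ U) ≫ (β_ V U).hom := by
        simp only [Category.assoc]
        rw [← BraidedCategory.braiding_naturality_left (image.ι f) U]
        simp [BraidedCategory.braiding_naturality_right_assoc]
    _ = (β_ U V).hom ≫ (f ▷ U) ≫ (β_ V U).hom := by
        rw [← comp_whiskerRight_assoc, image.fac]
    _ = U ◁ f := hf1 U
    _ = (U ◁ factorThruImage f ≫ 𝟙 (U ⊗ image f)) ≫ (U ◁ image.ι f) := by
        simp [← MonoidalCategory.whiskerLeft_comp]
end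

section
/- In a linear ribbon category with a modified trace, direct sums of objects with strong decomposition have strong decomposition. -/
open CategoryTheory CategoryTheory.Limits CategoryTheory.MonoidalCategory

/-- An object is negligible for the modified trace `t` if `t` vanishes on all of its
endomorphisms. -/
def Negligible {k : Type*} [Field k] {C : Type*} [Category C] [Preadditive C]
    (t : ∀ V : C, End V → k) (V : C) : Prop :=
  ∀ f : End V, t V f = 0

/-- An object is semisimple if it is a finite direct sum of simple objects. -/
def SemisimpleObj {C : Type*} [Category C] [Preadditive C] [HasFiniteBiproducts C] [HasBinaryBiproducts C]
    (X : C) : Prop :=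
  ∃ (n : ℕ) (Y : Fin n → C), (∀ i, Simple (Y i)) ∧ Nonempty (X ≅ ⨁ Y)

/-- `X` has strong decomposition if `X ≅ S ⊞ N` with `S` semisimple and non-negligible and
`N` negligible. -/
def StrongDecomp {k : Type*} [Field k] {C : Type*} [Category C] [Preadditive C]
    [HasFiniteBiproducts C] [HasBinaryBiproducts C] (t : ∀ V : C, End V → k) (X : C) : Prop :=
  ∃ S N : C, SemisimpleObj S ∧ ¬ Negligible t S ∧ Negligible t N ∧ Nonempty (X ≅ S ⊞ N)

section Aux

variable {C : Type*} [Category C] [Preadditive C] [HasFiniteBiproducts C] [HasBinaryBiproducts C]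

/-- A biproduct of two finite biproducts is a finite biproduct over the appended family. -/
noncomputable def biprodBiproductIso {n m : ℕ} (f : Fin n → C) (g : Fin m → C) :
    (⨁ f) ⊞ (⨁ g) ≅ ⨁ (Fin.append f g) where
  hom := biprod.desc
    (biproduct.desc fun i => eqToHom (Fin.append_left f g i).symm ≫ biproduct.ι (Fin.append f g) (Fin.castAdd m i))
    (biproduct.desc fun i => eqToHom (Fin.append_right f g i).symm ≫ biproduct.ι (Fin.append f g) (Fin.natAdd n i))
  inv := biproduct.desc fun j => Fin.addCases (motive := fun j => Fin.append f g j ⟶ (⨁ f) ⊞ (⨁ g))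
    (fun i => eqToHom (Fin.append_left f g i) ≫ biproduct.ι f i ≫ biprod.inl)
    (fun i => eqToHom (Fin.append_right f g i) ≫ biproduct.ι g i ≫ biprod.inr) j
  hom_inv_id := by
    ext <;> simp [Fin.addCases_left, Fin.addCases_right]
  inv_hom_id := by
    apply biproduct.hom_ext'
    intro j
    induction j using Fin.addCases with
    | left i => simp [Fin.addCases_left]
    | right i => simp [Fin.addCases_right]

lemma SemisimpleObj.biprod {S T : C} (hS : SemisimpleObj S) (hT : SemisimpleObj T) :
    SemisimpleObj (S ⊞ T) := by
  obtain ⟨n, f, hf, ⟨e₁⟩⟩ := hS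
  obtain ⟨m, g, hg, ⟨e₂⟩⟩ := hT
  refine ⟨n + m, Fin.append f g, fun i => ?_, ⟨?_⟩⟩
  · induction i using Fin.addCases with
    | left i => rw [Fin.append_left]; exact hf i
    | right i => rw [Fin.append_right]; exact hg i
  · exact (CategoryTheory.Limits.biprod.mapIso e₁ e₂).trans (biprodBiproductIso f g)

/-- Shuffling a biproduct of biproducts. -/
noncomputable def biprodShuffle (A B D E : C) : (A ⊞ B) ⊞ (D ⊞ E) ≅ (A ⊞ D) ⊞ (B ⊞ E) where
  hom := biprod.lift
    (biprod.lift (biprod.fst ≫ biprod.fst) (biprod.snd ≫ biprod.fst))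
    (biprod.lift (biprod.fst ≫ biprod.snd) (biprod.snd ≫ biprod.snd))
  inv := biprod.lift
    (biprod.lift (biprod.fst ≫ biprod.fst) (biprod.snd ≫ biprod.fst))
    (biprod.lift (biprod.fst ≫ biprod.snd) (biprod.snd ≫ biprod.snd))

end Aux

/-- In a linear ribbon category with a modified trace, the direct sum of two objects with
strong decomposition has strong decomposition. -/
theorem stmt_7 {k : Type*} [Field k] {C : Type*} [Category C] [Preadditive C] [Linear k C]
    [MonoidalCategory C] [BraidedCategory C] [RightRigidCategory C] [HasFiniteBiproducts C] [HasBinaryBiproducts C]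
    (t : ∀ V : C, End V → k)
    -- negligible objects form an ideal: they are closed under retracts and direct sums
    (hretract : ∀ (X Y : C) (r : Y ⟶ X) (s : X ⟶ Y), s ≫ r = 𝟙 X →
      Negligible t Y → Negligible t X)
    (hsum : ∀ X Y : C, Negligible t X → Negligible t Y → Negligible t (X ⊞ Y))
    (X Y : C) (hX : StrongDecomp t X) (hY : StrongDecomp t Y) :
    StrongDecomp t (X ⊞ Y) := by
  obtain ⟨S₁, N₁, hS₁, hnS₁, hN₁, ⟨e₁⟩⟩ := hX
  obtain ⟨S₂, N₂, hS₂, hnS₂, hN₂, ⟨e₂⟩⟩ := hY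
  refine ⟨S₁ ⊞ S₂, N₁ ⊞ N₂, hS₁.biprod hS₂, ?_, hsum _ _ hN₁ hN₂,
    ⟨(biprod.mapIso e₁ e₂).trans (biprodShuffle S₁ N₁ S₂ N₂)⟩⟩
  intro hneg
  exact hnS₁ (hretract S₁ (S₁ ⊞ S₂) biprod.fst biprod.inl (by simp) hneg)
end

section
/- Let C be a pre-modular G-category relative to (Z,X), and fix a generic degree g ∈ G∖X with simple objects {V_i}_{i∈I_g}, twists θ_{V_i} = t_i·id with t_i ≠ 0, and modified dimensions d(V_i) ≠ 0. If the matrix S' = (S'_{ij}) is invertible, then the scalar Δ₋ = t_j⁻¹ · Σ_{i∈I_g} S'_{ij} · t_i⁻¹ · d(V_i) is nonzero (for any j ∈ I_g for which it is defined). -/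
open Finset in
/-- If the matrix `S'` is invertible and the quantities
`Δ₋(j) = t j⁻¹ * Σ_i S' i j * t i⁻¹ * d i` do not depend on `j` (with all twists `t i` and
modified dimensions `d i` nonzero), then `Δ₋` is nonzero. -/
theorem stmt_11 {k : Type*} [Field k] {I : Type*} [Fintype I] [DecidableEq I] [Nonempty I]
    (S' : Matrix I I k) (hS' : S'.det ≠ 0)
    (t d : I → k) (ht : ∀ i, t i ≠ 0) (hd : ∀ i, d i ≠ 0)
    (hconst : ∀ j j' : I,
      (t j)⁻¹ * ∑ i, S' i j * ((t i)⁻¹ * d i) =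
      (t j')⁻¹ * ∑ i, S' i j' * ((t i)⁻¹ * d i)) :
    ∀ j : I, (t j)⁻¹ * ∑ i, S' i j * ((t i)⁻¹ * d i) ≠ 0 := by
  intro j h0
  set v : I → k := fun i => (t i)⁻¹ * d i with hv
  have hsum : ∀ j' : I, ∑ i, S' i j' * v i = 0 := by
    intro j'
    have := (hconst j j').symm.trans h0
    have htj' := inv_ne_zero (ht j')
    exact (mul_eq_zero.mp this).resolve_left htj'
  have hmv : (S'.transpose).mulVec v = 0 := by
    funext j'
    simpa [Matrix.mulVec, dotProduct, Matrix.transpose] using hsum j'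
  have hdet : (S'.transpose).det ≠ 0 := by rwa [Matrix.det_transpose]
  have hv0 : v = 0 := Matrix.eq_zero_of_mulVec_eq_zero hdet hmv
  have i := Classical.arbitrary I
  have : v i = 0 := by rw [hv0]; rfl
  exact (mul_ne_zero (inv_ne_zero (ht i)) (hd i)) this
end

section
/- Suppose all mixed S-matrices S_{g,h} (for generic g, h) have no zero entries, and there are fusion rules V_{i₁} ⊗ V_{i₂} ≅ ⊕_{i₃} c^{i₃}_{i₁,i₂} V_{i₃} satisfying the multiplicativity relation d(V_{i₄})⁻¹ · S_{i₁,i₄} · S_{i₂,i₄} = Σ_{i₃} c^{i₃}_{i₁,i₂} S_{i₃,i₄}. Then the rank of S_{g₂,g₄} is at most the rank of S_{g₁+g₂,g₄} for all generic g₁, g₂, g₄ with g₁+g₂ generic. -/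
/-- If the mixed `S`-matrix `S₁₄` has no zero entries and the fusion rules give the
multiplicativity relation `d(V_{i₄})⁻¹ S_{i₁,i₄} S_{i₂,i₄} = Σ_{i₃} c^{i₃}_{i₁,i₂} S_{i₃,i₄}`,
then `rank S₂₄ ≤ rank S₃₄` (with `g₃ = g₁ + g₂`). -/
theorem stmt_12 {k : Type*} [Field k] {I₁ I₂ I₃ I₄ : Type*}
    [Fintype I₁] [Fintype I₂] [Fintype I₃] [Fintype I₄] [Nonempty I₁]
    (S₁₄ : Matrix I₁ I₄ k) (S₂₄ : Matrix I₂ I₄ k) (S₃₄ : Matrix I₃ I₄ k)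
    (d : I₄ → k) (hd : ∀ i, d i ≠ 0)
    (hnz : ∀ i j, S₁₄ i j ≠ 0)
    (c : I₁ → I₂ → I₃ → ℕ)
    (hfus : ∀ i₁ i₂ i₄,
      (d i₄)⁻¹ * (S₁₄ i₁ i₄ * S₂₄ i₂ i₄) = ∑ i₃, (c i₁ i₂ i₃ : k) * S₃₄ i₃ i₄) :
    S₂₄.rank ≤ S₃₄.rank := by
  classical
  obtain ⟨i₁⟩ := ‹Nonempty I₁›
  set C : Matrix I₂ I₃ k := fun i₂ i₃ => (c i₁ i₂ i₃ : k) with hC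
  set D : Matrix I₄ I₄ k := Matrix.diagonal (fun i₄ => d i₄ * (S₁₄ i₁ i₄)⁻¹) with hD
  have hfact : S₂₄ = C * S₃₄ * D := by
    ext i₂ i₄
    rw [Matrix.mul_apply]
    have : ∀ i, (C * S₃₄) i₂ i * D i i₄
        = if i = i₄ then (C * S₃₄) i₂ i * (d i₄ * (S₁₄ i₁ i₄)⁻¹) else 0 := by
      intro i
      by_cases h : i = i₄ <;> simp [hD, Matrix.diagonal, h]
    rw [Finset.sum_congr rfl fun i _ => this i, Finset.sum_ite_eq' _ i₄]
    simp only [Finset.mem_univ, if_true]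
    rw [Matrix.mul_apply]
    have := hfus i₁ i₂ i₄
    rw [← this]
    field_simp
    rw [eq_div_iff (mul_ne_zero (hd i₄) (hnz i₁ i₄))]
    ring
  have h1 : (C * S₃₄ * D).rank ≤ (C * S₃₄).rank := Matrix.rank_mul_le_left _ _
  have h2 : (C * S₃₄).rank ≤ S₃₄.rank := Matrix.rank_mul_le_right _ _
  rw [hfact]
  exact le_trans h1 h2
end

section
/- Under the hypotheses of the previous rank inequality applied symmetrically (using −g₁ as well), the rank of all mixed S-matrices S_{g,h} over generic degrees g, h is constant. -/
/-- If the set `X` of non-generic degrees is small and symmetric, mixed `S`-matrices are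
transposes of each other under exchange of the two degrees, and the fusion rank inequality
`rank S_{g₂,g₄} ≤ rank S_{g₁+g₂,g₄}` holds for all generic degrees, then the rank of all
mixed `S`-matrices over generic degrees is constant. -/
theorem stmt_13 {k G : Type*} [Field k] [AddCommGroup G]
    (X : Set G)
    (hsym : ∀ g : G, g ∈ X ↔ -g ∈ X)
    (hsmall : ∀ (n : ℕ) (f : Fin n → G), ∃ g : G, ∀ i, g - f i ∉ X)
    (I : G → Type*) [∀ g, Fintype (I g)]
    (S : ∀ g h : G, Matrix (I g) (I h) k)
    (htrans : ∀ g h : G, S h g = (S g h).transpose)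
    (hrank : ∀ g₁ g₂ g₄ : G, g₁ ∉ X → g₂ ∉ X → g₄ ∉ X → g₁ + g₂ ∉ X →
      (S g₂ g₄).rank ≤ (S (g₁ + g₂) g₄).rank) :
    ∀ g h g' h' : G, g ∉ X → h ∉ X → g' ∉ X → h' ∉ X →
      (S g h).rank = (S g' h').rank := by
  -- rank is invariant under swapping the two degrees
  have hswap : ∀ g h : G, (S g h).rank = (S h g).rank := by
    intro g h
    rw [htrans g h, Matrix.rank_transpose]
  -- rank equality under shifting by a generic g₁
  have heq : ∀ g₁ g₂ g₄ : G, g₁ ∉ X → g₂ ∉ X → g₄ ∉ X → g₁ + g₂ ∉ X →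
      (S g₂ g₄).rank = (S (g₁ + g₂) g₄).rank := by
    intro g₁ g₂ g₄ h1 h2 h4 h12
    refine le_antisymm (hrank g₁ g₂ g₄ h1 h2 h4 h12) ?_
    have h1' : -g₁ ∉ X := fun h => h1 ((hsym g₁).2 h)
    have := hrank (-g₁) (g₁ + g₂) g₄ h1' h12 h4 (by rwa [neg_add_cancel_left])
    rwa [neg_add_cancel_left] at this
  -- ranks agree when the first index varies, second fixed
  have hfst : ∀ a b d : G, a ∉ X → b ∉ X → d ∉ X →
      (S a d).rank = (S b d).rank := by
    intro a b d ha hb hd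
    obtain ⟨c, hc⟩ := hsmall 3 ![a, b, 0]
    have hca : c - a ∉ X := hc 0
    have hcb : c - b ∉ X := hc 1
    have hc0 : c ∉ X := by simpa using hc 2
    have e1 := heq (c - a) a d hca ha hd (by simpa using hc0)
    have e2 := heq (c - b) b d hcb hb hd (by simpa using hc0)
    rw [e1, e2, sub_add_cancel, sub_add_cancel]
  intro g h g' h' hg hh hg' hh'
  calc (S g h).rank = (S g' h).rank := hfst g g' h hg hg' hh
    _ = (S h g').rank := hswap g' h
    _ = (S h' g').rank := hfst h h' g' hh hh' hg'
    _ = (S g' h').rank := hswap h' g'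
end

section
/- Let C be an abelian braided linear category with exact tensor product. If f: V → V is a transparent endomorphism, then f factors through the Müger center: f = ι ∘ f| where f|: V ↠ Im(f) and ι: Im(f) ↪ V, and Im(f) is a transparent object. -/
open CategoryTheory CategoryTheory.Limits CategoryTheory.MonoidalCategory

/-- In an abelian braided category with exact tensor product, a transparent endomorphism
`f : V ⟶ V` factors through its image, `f = ι ∘ f|`, and the image is a transparent object
(hence `f` factors through the Müger center). -/
theorem stmt_15 {C : Type*} [Category C] [MonoidalCategory C] [BraidedCategory C] [Abelian C]
    (hMonoL : ∀ (W : C) {X Y : C} (f : X ⟶ Y), Mono f → Mono (W ◁ f))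
    (hMonoR : ∀ (W : C) {X Y : C} (f : X ⟶ Y), Mono f → Mono (f ▷ W))
    (hEpiL : ∀ (W : C) {X Y : C} (f : X ⟶ Y), Epi f → Epi (W ◁ f))
    (hEpiR : ∀ (W : C) {X Y : C} (f : X ⟶ Y), Epi f → Epi (f ▷ W))
    (V : C) (f : V ⟶ V)
    (hf1 : ∀ U : C, (β_ U V).hom ≫ (f ▷ U) ≫ (β_ V U).hom = U ◁ f)
    (hf2 : ∀ W : C, (β_ V W).hom ≫ (W ◁ f) ≫ (β_ W V).hom = f ▷ W) :
    (factorThruImage f ≫ image.ι f = f) ∧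
      (∀ U : C, (β_ U (image f)).hom ≫ (β_ (image f) U).hom = 𝟙 (U ⊗ image f)) := by
  refine ⟨image.fac f, fun U => ?_⟩
  haveI : Epi (U ◁ factorThruImage f) := hEpiL U _ inferInstance
  haveI : Mono (U ◁ image.ι f) := hMonoL U _ inferInstance
  rw [← cancel_epi (U ◁ factorThruImage f), ← cancel_mono (U ◁ image.ι f)]
  simp only [Category.assoc]
  have key : (β_ U V).hom ≫ (β_ V U).hom ≫ (U ◁ f) = U ◁ f := by
    rw [← BraidedCategory.braiding_naturality_left f U, hf1 U]
  calc (U ◁ factorThruImage f) ≫ (β_ U (image f)).hom ≫ (β_ (image f) U).hom ≫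
        (U ◁ image.ι f)
      = (β_ U V).hom ≫ (factorThruImage f ▷ U) ≫ (β_ (image f) U).hom ≫
        (U ◁ image.ι f) := by
        rw [← Category.assoc, ← Category.assoc,
          BraidedCategory.braiding_naturality_right U (factorThruImage f)]
        simp
    _ = (β_ U V).hom ≫ (β_ V U).hom ≫ (U ◁ factorThruImage f) ≫ (U ◁ image.ι f) := by
        rw [← Category.assoc (factorThruImage f ▷ U),
          BraidedCategory.braiding_naturality_left (factorThruImage f) U]
        simp
    _ = (β_ U V).hom ≫ (β_ V U).hom ≫ (U ◁ f) := by
        rw [← MonoidalCategory.whiskerLeft_comp, image.fac]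
    _ = U ◁ f := key
    _ = (U ◁ factorThruImage f) ≫ 𝟙 (U ⊗ image f) ≫ (U ◁ image.ι f) := by
        simp [← MonoidalCategory.whiskerLeft_comp]
    _ = (U ◁ factorThruImage f) ≫ 𝟙 (U ⊗ image f) ≫ U ◁ image.ι f := rfl
end
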